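/- arXiv:0710.3781 — 3 statements merged into one kernel-verified Lean document; each statement's English description precedes it below -/
import Mathlib

section
/- Let α be a type and let V_1, …, V_l be finite subsets of α. For every element v ∈ α, the number of indices i ∈ {1, …, l} with v ∈ V_i equals the number of indices k ∈ {1, …, l} with v ∈ Ṽ_k; that is, |{i : v ∈ V_i}| = |{k : v ∈ Ṽ_k}|. -/
/-- For a family of finite sets `V 0, …, V (l-1)` of `α`, the derived set
`Ṽ_k = ⋃_{ {i₁,…,i_k} ⊆ {1,…,l} } V_{i₁} ∩ ⋯ ∩ V_{i_k}`, the union ranging over all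
`k`-element index subsets. -/
def tildeSet {α : Type*} [DecidableEq α] {l : ℕ} (V : Fin l → Finset α) (k : ℕ) : Finset α :=
  ((Finset.univ : Finset (Fin l)).powersetCard k).sup fun s =>
    if h : s.Nonempty then s.inf' h V else ∅

/-- The number of indices `i ∈ {1,…,l}` with `v ∈ V_i` equals the number of indices
`k ∈ {1,…,l}` with `v ∈ Ṽ_k`. -/
theorem card_mem_eq_card_mem_tildeSet {α : Type*} [DecidableEq α] {l : ℕ}
    (V : Fin l → Finset α) (v : α) :
    (Finset.univ.filter fun i : Fin l => v ∈ V i).card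
      = ((Finset.Icc 1 l).filter fun k : ℕ => v ∈ tildeSet V k).card := by
  classical
  set S := Finset.univ.filter fun i : Fin l => v ∈ V i with hS
  have hSmem : ∀ i, i ∈ S ↔ v ∈ V i := by
    intro i; simp [hS]
  have hSl : S.card ≤ l := by
    simpa using (Finset.card_le_card (Finset.filter_subset _ _)).trans
      (le_of_eq (Finset.card_univ.trans (Fintype.card_fin l)))
  have key : ∀ k, v ∈ tildeSet V k ↔ 1 ≤ k ∧ k ≤ S.card := by
    intro k
    constructor
    · intro hv
      rw [tildeSet, Finset.mem_sup] at hv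
      obtain ⟨s, hs, hvs⟩ := hv
      rw [Finset.mem_powersetCard] at hs
      split_ifs at hvs with hne
      · have hsub : s ⊆ S := by
          intro i hi
          rw [hSmem]
          exact Finset.inf'_le V hi hvs
        refine ⟨?_, ?_⟩
        · rw [← hs.2]
          exact Finset.card_pos.mpr hne
        · rw [← hs.2]
          exact Finset.card_le_card hsub
      · exact absurd hvs (Finset.notMem_empty v)
    · rintro ⟨hk1, hkm⟩
      obtain ⟨s, hsub, hcard⟩ := Finset.exists_subset_card_eq hkm
      have hne : s.Nonempty := Finset.card_pos.mp (hcard ▸ hk1)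
      rw [tildeSet, Finset.mem_sup]
      refine ⟨s, ?_, ?_⟩
      · rw [Finset.mem_powersetCard]
        exact ⟨Finset.subset_univ s, hcard⟩
      · rw [dif_pos hne]
        have hle : ({v} : Finset α) ≤ s.inf' hne V :=
          Finset.le_inf' hne _ (fun i hi =>
            Finset.singleton_subset_iff.mpr ((hSmem i).1 (hsub hi)))
        exact hle (Finset.mem_singleton_self v)
  have : ((Finset.Icc 1 l).filter fun k : ℕ => v ∈ tildeSet V k) = Finset.Icc 1 S.card := by
    ext k
    simp only [Finset.mem_filter, Finset.mem_Icc, key]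
    constructor
    · rintro ⟨⟨h1, _⟩, _, h3⟩; exact ⟨h1, h3⟩
    · rintro ⟨h1, h2⟩; exact ⟨⟨h1, h2.trans hSl⟩, h1, h2⟩
  rw [this, Nat.card_Icc]
  omega
end

section
/- Let α be a type, let V_1, …, V_l be finite subsets of α, and let h : α → ℝ be any function. Then ∑_{i=1}^{l} ∑_{v ∈ V_i} h(v) = ∑_{k=1}^{l} ∑_{v ∈ Ṽ_k} h(v). -/
lemma mem_tildeSet_iff {α : Type*} [DecidableEq α] {l : ℕ} (V : Fin l → Finset α) {k : ℕ}
    (hk : 1 ≤ k) (v : α) :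
    v ∈ tildeSet V k ↔ k ≤ (Finset.univ.filter (fun i => v ∈ V i)).card := by
  rw [tildeSet, Finset.mem_sup]
  constructor
  · rintro ⟨s, hs, hv⟩
    rw [Finset.mem_powersetCard_univ] at hs
    split_ifs at hv with hne
    · calc k = s.card := hs.symm
        _ ≤ _ := Finset.card_le_card fun i hi => Finset.mem_filter.mpr
            ⟨Finset.mem_univ i, Finset.inf'_le V hi hv⟩
    · simp at hv
  · intro hc
    obtain ⟨s, hsub, hcard⟩ := Finset.exists_subset_card_eq hc
    have hne : s.Nonempty := Finset.card_pos.mp (hcard ▸ hk)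
    refine ⟨s, Finset.mem_powersetCard_univ.mpr hcard, ?_⟩
    rw [dif_pos hne]
    have : {v} ≤ s.inf' hne V :=
      Finset.le_inf' hne _ fun i hi =>
        Finset.singleton_subset_iff.mpr (Finset.mem_filter.mp (hsub hi)).2
    exact this (Finset.mem_singleton_self v)

/-- `∑_{i=1}^{l} ∑_{v ∈ V_i} h(v) = ∑_{k=1}^{l} ∑_{v ∈ Ṽ_k} h(v)`. -/
theorem sum_sum_eq_sum_sum_tildeSet {α : Type*} [DecidableEq α] {l : ℕ}
    (V : Fin l → Finset α) (h : α → ℝ) :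
    ∑ i : Fin l, ∑ v ∈ V i, h v = ∑ k ∈ Finset.Icc 1 l, ∑ v ∈ tildeSet V k, h v := by
  set U : Finset α := Finset.univ.sup V with hU
  set c : α → ℕ := fun v => (Finset.univ.filter (fun i => v ∈ V i)).card with hc
  have hcl : ∀ v, c v ≤ l := fun v => le_trans (Finset.card_filter_le _ _) (by simp)
  have hVU : ∀ i, V i ⊆ U := fun i => Finset.le_sup (Finset.mem_univ i)
  have htU : ∀ k ∈ Finset.Icc 1 l, tildeSet V k ⊆ U := by
    intro k hk v hv
    rw [mem_tildeSet_iff V (Finset.mem_Icc.mp hk).1] at hv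
    have : 1 ≤ c v := le_trans (Finset.mem_Icc.mp hk).1 hv
    obtain ⟨i, hi⟩ := Finset.card_pos.mp this
    exact hVU i (Finset.mem_filter.mp hi).2
  have lhs : ∑ i : Fin l, ∑ v ∈ V i, h v = ∑ v ∈ U, (c v : ℝ) * h v := by
    have : ∀ i : Fin l, ∑ v ∈ V i, h v = ∑ v ∈ U, if v ∈ V i then h v else 0 := by
      intro i
      rw [Finset.sum_ite_mem, Finset.inter_eq_right.mpr (hVU i)]
    simp_rw [this]
    rw [Finset.sum_comm]
    refine Finset.sum_congr rfl fun v _ => ?_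
    rw [← Finset.sum_filter, Finset.sum_const, nsmul_eq_mul]
  have rhs : ∑ k ∈ Finset.Icc 1 l, ∑ v ∈ tildeSet V k, h v = ∑ v ∈ U, (c v : ℝ) * h v := by
    have step : ∀ k ∈ Finset.Icc 1 l, ∑ v ∈ tildeSet V k, h v
        = ∑ v ∈ U, if k ≤ c v then h v else 0 := by
      intro k hk
      rw [← Finset.sum_filter]
      refine Finset.sum_congr ?_ fun _ _ => rfl
      ext v
      rw [Finset.mem_filter, mem_tildeSet_iff V (Finset.mem_Icc.mp hk).1]
      constructor
      · intro hv
        exact ⟨htU k hk ((mem_tildeSet_iff V (Finset.mem_Icc.mp hk).1 v).mpr hv), hv⟩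
      · exact fun hv => hv.2
    rw [Finset.sum_congr rfl step, Finset.sum_comm]
    refine Finset.sum_congr rfl fun v _ => ?_
    rw [← Finset.sum_filter]
    have : (Finset.Icc 1 l).filter (fun k => k ≤ c v) = Finset.Icc 1 (c v) := by
      ext k
      simp only [Finset.mem_filter, Finset.mem_Icc]
      exact ⟨fun ⟨⟨h1, _⟩, h2⟩ => ⟨h1, h2⟩, fun ⟨h1, h2⟩ => ⟨⟨h1, h2.trans (hcl v)⟩, h2⟩⟩
    rw [this, Finset.sum_const, Nat.card_Icc, nsmul_eq_mul]
    simp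
  rw [lhs, rhs]
end

section
/- (k-way submodularity) Let α be a type, let ξ : Finset α → ℝ be submodular, and let V_1, …, V_l be finite subsets of α. Then ξ(V_1) + ⋯ + ξ(V_l) ≥ ξ(Ṽ_1) + ⋯ + ξ(Ṽ_l). -/
open Finset

section Submodular

variable {α : Type*} [DecidableEq α] {ξ : Finset α → ℝ}

theorem sum_Icc_union_add_le_of_submodular
    (hsub : ∀ A B : Finset α, ξ (A ∪ B) + ξ (A ∩ B) ≤ ξ A + ξ B)
    (T g : ℕ → Finset α) (hg : ∀ k ≠ 0, g (k + 1) = T k ∩ g k) (n : ℕ) :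
    ∑ k ∈ Icc 1 n, ξ (T k ∪ g k) + ξ (g (n + 1)) ≤ ∑ k ∈ Icc 1 n, ξ (T k) + ξ (g 1) := by
  induction n with
  | zero => simp
  | succ n ih =>
    rw [sum_Icc_succ_top (by omega), sum_Icc_succ_top (by omega)]
    have step := hsub (T (n + 1)) (g (n + 1))
    rw [← hg _ n.succ_ne_zero] at step
    linarith

end Submodular

section TildeSet

variable {α : Type*} [DecidableEq α] {l : ℕ}

def coverCount (V : Fin l → Finset α) (x : α) : ℕ :=
  #{i | x ∈ V i}

theorem coverCount_le (V : Fin l → Finset α) (x : α) : coverCount V x ≤ l := by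
  simpa [coverCount] using card_filter_le (univ : Finset (Fin l)) (fun i => x ∈ V i)

theorem coverCount_snoc (V : Fin l → Finset α) (v : Finset α) (x : α) :
    coverCount (Fin.snoc V v : Fin (l + 1) → Finset α) x
      = coverCount V x + if x ∈ v then 1 else 0 := by
  simp only [coverCount, card_filter, Fin.sum_univ_castSucc, Fin.snoc_castSucc, Fin.snoc_last]

theorem mem_tildeSet {V : Fin l → Finset α} {k : ℕ} (hk : k ≠ 0) {x : α} :
    x ∈ tildeSet V k ↔ k ≤ coverCount V x := by
  simp only [tildeSet, mem_sup, mem_powersetCard, subset_univ, true_and]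
  constructor
  · rintro ⟨s, rfl, hx⟩
    have hs : s.Nonempty := card_ne_zero.mp hk
    rw [dif_pos hs, mem_inf'] at hx
    exact card_le_card fun i hi => mem_filter.mpr ⟨mem_univ i, hx i hi⟩
  · intro h
    obtain ⟨s, hs, rfl⟩ := exists_subset_card_eq h
    refine ⟨s, rfl, ?_⟩
    rw [dif_pos (card_ne_zero.mp hk), mem_inf']
    exact fun i hi => (mem_filter.mp (hs hi)).2

theorem tildeSet_eq_empty_of_lt (V : Fin l → Finset α) {k : ℕ} (hk : l < k) :
    tildeSet V k = ∅ := by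
  ext x
  rw [mem_tildeSet (by omega)]
  have := coverCount_le V x
  simp only [notMem_empty, iff_false]
  omega

theorem tildeSet_snoc (V : Fin l → Finset α) (v : Finset α) {k : ℕ} (hk : k ≠ 0) :
    tildeSet (Fin.snoc V v) k = tildeSet V k ∪ {x ∈ v | k ≤ coverCount V x + 1} := by
  ext x
  rw [mem_tildeSet hk, coverCount_snoc, mem_union, mem_tildeSet hk, mem_filter]
  grind


theorem sum_tildeSet_snoc_le {ξ : Finset α → ℝ}
    (hsub : ∀ A B : Finset α, ξ (A ∪ B) + ξ (A ∩ B) ≤ ξ A + ξ B)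
    (V : Fin l → Finset α) (v : Finset α) :
    ∑ k ∈ Icc 1 (l + 1), ξ (tildeSet (Fin.snoc V v) k)
      ≤ ∑ k ∈ Icc 1 l, ξ (tildeSet V k) + ξ v := by
  set g : ℕ → Finset α := fun k => {x ∈ v | k ≤ coverCount V x + 1} with hg
  have hg_succ : ∀ k ≠ 0, g (k + 1) = tildeSet V k ∩ g k := fun k hk => by
    ext x
    simp only [hg, mem_inter, mem_filter, mem_tildeSet hk]
    grind
  have hg_one : g 1 = v := filter_true_of_mem fun x _ => by omega
  have hg_top : g (l + 2) = ∅ := by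
    ext x
    have := coverCount_le V x
    simp only [hg, mem_filter, notMem_empty, iff_false]
    omega
  have telescope := sum_Icc_union_add_le_of_submodular hsub (tildeSet V) g hg_succ (l + 1)
  rw [sum_Icc_succ_top (by omega) (fun k => ξ (tildeSet V k)),
    tildeSet_eq_empty_of_lt V l.lt_succ_self, ← hg_top, hg_one] at telescope
  calc ∑ k ∈ Icc 1 (l + 1), ξ (tildeSet (Fin.snoc V v) k)
      = ∑ k ∈ Icc 1 (l + 1), ξ (tildeSet V k ∪ g k) :=
        sum_congr rfl fun k hk => by rw [tildeSet_snoc V v (by simp at hk; omega)]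
    _ ≤ ∑ k ∈ Icc 1 l, ξ (tildeSet V k) + ξ v := by linarith

end TildeSet

/-- k-way submodularity: if `ξ` is submodular then
`ξ(V_1) + ⋯ + ξ(V_l) ≥ ξ(Ṽ_1) + ⋯ + ξ(Ṽ_l)`. -/
theorem k_way_submodularity {α : Type*} [DecidableEq α]
    (ξ : Finset α → ℝ)
    (hsub : ∀ A B : Finset α, ξ (A ∪ B) + ξ (A ∩ B) ≤ ξ A + ξ B)
    {l : ℕ} (V : Fin l → Finset α) :
    ∑ k ∈ Finset.Icc 1 l, ξ (tildeSet V k) ≤ ∑ i : Fin l, ξ (V i) := by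
  induction l with
  | zero => simp
  | succ l ih =>
    obtain ⟨W, v, rfl⟩ : ∃ W v, V = Fin.snoc W v :=
      ⟨Fin.init V, V (Fin.last l), (Fin.snoc_init_self V).symm⟩
    calc ∑ k ∈ Icc 1 (l + 1), ξ (tildeSet (Fin.snoc W v) k)
        ≤ ∑ k ∈ Icc 1 l, ξ (tildeSet W k) + ξ v := sum_tildeSet_snoc_le hsub W v
      _ ≤ ∑ i : Fin l, ξ (W i) + ξ v := by gcongr; exact ih W
      _ = ∑ i : Fin (l + 1), ξ ((Fin.snoc W v : Fin (l + 1) → Finset α) i) := by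
        simp only [Fin.sum_univ_castSucc, Fin.snoc_castSucc, Fin.snoc_last]
end
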